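/- Four points chosen independently and uniformly on the circle, paired into two pairs (the first two points forming one pair and the last two the other), determine two chords; the probability that the two chords intersect is 1/3. -/

import Mathlib

open MeasureTheory Real Set

/-- The uniform probability measure on the interval `[a,b]`. -/
noncomputable def unif (a b : ℝ) : Measure ℝ :=
  (ENNReal.ofReal (b - a))⁻¹ • volume.restrict (Icc a b)

/-- Reduction of a real number modulo 2π, with values in `[0, 2π)`. -/
noncomputable def mod2pi (x : ℝ) : ℝ := x - 2 * π * ⌊x / (2 * π)⌋

/-- The point with argument `c` lies on the open arc travelled counterclockwise
    from argument `a` to argument `b`. -/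
noncomputable def onArc (a b c : ℝ) : Prop := mod2pi (c - a) < mod2pi (b - a)

/-- The chords of the unit circle joining e^{iz₁} to e^{iz₂} and e^{iw₁} to e^{iw₂}
    cross, i.e. the two pairs interleave in the cyclic order: exactly one of
    w₁, w₂ lies on the arc from z₁ to z₂. -/
noncomputable def chordsCross (z₁ z₂ w₁ w₂ : ℝ) : Prop :=
  onArc z₁ z₂ w₁ ≠ onArc z₁ z₂ w₂

open scoped ENNReal symmDiff

/-! Condition on the first chord. If `z₂ - z₁ ≡ t (mod 2π)`, a uniform point lands on the arc
from `z₁` to `z₂` with probability `s = t / 2π`, so the independent endpoints of the second chord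
are separated by the first one with probability `2 s (1 - s)`. Rotation by `z₁` preserves the
uniform measure, hence `t` is again uniform on `[0, 2π)`, and `∫₀¹ 2 s (1 - s) ds = 1 / 3`. -/

lemma mod2pi_eq_toIcoMod (x : ℝ) : mod2pi x = toIcoMod two_pi_pos 0 x := by
  rw [toIcoMod_eq_fract_mul, Int.fract, mod2pi]
  field_simp

lemma mod2pi_mem_Ico (x : ℝ) : mod2pi x ∈ Ico 0 (2 * π) := by
  simpa [mod2pi_eq_toIcoMod] using toIcoMod_mem_Ico' two_pi_pos x

lemma mod2pi_of_mem_Ico {x : ℝ} (hx : x ∈ Ico 0 (2 * π)) : mod2pi x = x := by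
  rw [mod2pi_eq_toIcoMod, toIcoMod_eq_self, zero_add]
  exact hx

lemma mod2pi_zsmul_add (n : ℤ) (x : ℝ) : mod2pi (n • (2 * π) + x) = mod2pi x := by
  simp only [mod2pi_eq_toIcoMod, toIcoMod_zsmul_add]

lemma measurable_mod2pi : Measurable mod2pi := by
  unfold mod2pi; fun_prop

lemma setLIntegral_Icc_comp_mod2pi_sub (a : ℝ) {g : ℝ → ℝ≥0∞} (hg : Measurable g) :
    ∫⁻ w in Icc 0 (2 * π), g (mod2pi (w - a)) = ∫⁻ u in Icc 0 (2 * π), g u := by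
  have hper : ∀ (n : AddSubgroup.zmultiples (2 * π)) (w : ℝ),
      g (mod2pi ((n +ᵥ w) - a)) = g (mod2pi (w - a)) := by
    rintro ⟨_, n, rfl⟩ w
    simp only [AddSubgroup.vadd_def, vadd_eq_add, add_sub_assoc, mod2pi_zsmul_add]
  -- Periodicity moves the window to `(a, a + 2π]`, on which `mod2pi (w - a) = w - a` a.e.
  calc ∫⁻ w in Icc 0 (2 * π), g (mod2pi (w - a))
      = ∫⁻ w in Ioc 0 (0 + 2 * π), g (mod2pi (w - a)) := by
        rw [zero_add]; exact setLIntegral_congr Ioc_ae_eq_Icc.symm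
    _ = ∫⁻ w in Ioc a (a + 2 * π), g (mod2pi (w - a)) :=
        (isAddFundamentalDomain_Ioc two_pi_pos 0).setLIntegral_eq
          (isAddFundamentalDomain_Ioc two_pi_pos a) _ hper
    _ = ∫⁻ u in Ioc 0 (2 * π), g (mod2pi u) := by
        rw [show Ioc a (a + 2 * π) = (· - a) ⁻¹' Ioc 0 (2 * π) by
          rw [preimage_sub_const_Ioc, zero_add, add_comm]]
        exact (measurePreserving_sub_right volume a).setLIntegral_comp_preimage
          measurableSet_Ioc (hg.comp measurable_mod2pi)
    _ = ∫⁻ u in Ioo 0 (2 * π), g u := by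
        rw [setLIntegral_congr Ioo_ae_eq_Ioc.symm]
        exact setLIntegral_congr_fun measurableSet_Ioo fun u hu ↦ by
          rw [mod2pi_of_mem_Ico (Ioo_subset_Ico_self hu)]
    _ = ∫⁻ u in Icc 0 (2 * π), g u := setLIntegral_congr Ioo_ae_eq_Icc

lemma unif_apply (a b : ℝ) (s : Set ℝ) :
    unif a b s = (ENNReal.ofReal (b - a))⁻¹ * volume (s ∩ Icc a b) := by
  rw [unif, Measure.smul_apply, Measure.restrict_apply' measurableSet_Icc, smul_eq_mul]

lemma lintegral_unif (a b : ℝ) (f : ℝ → ℝ≥0∞) :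
    ∫⁻ x, f x ∂unif a b = (ENNReal.ofReal (b - a))⁻¹ * ∫⁻ x in Icc a b, f x := by
  rw [unif, lintegral_smul_measure, smul_eq_mul]

lemma isProbabilityMeasure_unif {a b : ℝ} (hab : a < b) : IsProbabilityMeasure (unif a b) :=
  ⟨by rw [unif_apply, univ_inter, Real.volume_Icc,
    ENNReal.inv_mul_cancel (by simpa using hab) ENNReal.ofReal_ne_top]⟩

instance : IsProbabilityMeasure (unif 0 (2 * π)) := isProbabilityMeasure_unif two_pi_pos

lemma unif_Iio {a b c : ℝ} (hab : a < b) (hc : c ∈ Icc a b) :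
    unif a b (Iio c) = ENNReal.ofReal ((c - a) / (b - a)) := by
  have : Iio c ∩ Icc a b = Ico a c := Set.ext fun x ↦
    ⟨fun ⟨hxc, hax, _⟩ ↦ ⟨hax, hxc⟩, fun ⟨hax, hxc⟩ ↦ ⟨hxc, hax, hxc.le.trans hc.2⟩⟩
  rw [unif_apply, this, Real.volume_Ico, ENNReal.ofReal_div_of_pos (sub_pos.2 hab),
    div_eq_mul_inv, mul_comm]

lemma lintegral_unif_ofReal {a b : ℝ} (hab : a < b) {f : ℝ → ℝ} (hf : IntegrableOn f (Icc a b))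
    (hf₀ : ∀ x ∈ Icc a b, 0 ≤ f x) :
    ∫⁻ x, ENNReal.ofReal (f x) ∂unif a b = ENNReal.ofReal ((∫ x in a..b, f x) / (b - a)) := by
  rw [lintegral_unif, ← ofReal_integral_eq_lintegral_ofReal hf
    ((ae_restrict_iff' measurableSet_Icc).2 (.of_forall hf₀)),
    intervalIntegral.integral_of_le hab.le, ← integral_Icc_eq_integral_Ioc,
    ENNReal.ofReal_div_of_pos (sub_pos.2 hab), div_eq_mul_inv, mul_comm]

lemma measurePreserving_mod2pi_sub (a : ℝ) :
    MeasurePreserving (fun w ↦ mod2pi (w - a)) (unif 0 (2 * π)) (unif 0 (2 * π)) := by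
  have hmeas : Measurable fun w ↦ mod2pi (w - a) := measurable_mod2pi.comp (measurable_sub_const a)
  refine ⟨hmeas, Measure.ext_of_lintegral _ fun g hg ↦ ?_⟩
  rw [lintegral_map hg hmeas, lintegral_unif, lintegral_unif,
    setLIntegral_Icc_comp_mod2pi_sub a hg]

lemma unif_setOf_onArc (a b : ℝ) :
    unif 0 (2 * π) {w | onArc a b w} = ENNReal.ofReal (mod2pi (b - a) / (2 * π)) := by
  rw [show {w | onArc a b w} = (fun w ↦ mod2pi (w - a)) ⁻¹' Iio (mod2pi (b - a)) from rfl,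
    (measurePreserving_mod2pi_sub a).measure_preimage measurableSet_Iio.nullMeasurableSet,
    unif_Iio two_pi_pos (Ico_subset_Icc_self (mod2pi_mem_Ico _)), sub_zero, sub_zero]

lemma prod_setOf_mem_ne_mem {α : Type*} [MeasurableSpace α] (μ ν : Measure α) [SigmaFinite ν]
    {s : Set α} (hs : MeasurableSet s) :
    (μ.prod ν) {p | (p.1 ∈ s) ≠ (p.2 ∈ s)} = μ s * ν sᶜ + μ sᶜ * ν s := by
  have : {p : α × α | (p.1 ∈ s) ≠ (p.2 ∈ s)} = s ×ˢ sᶜ ∪ sᶜ ×ˢ s := by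
    ext p
    simp only [mem_ofPred_eq, mem_union, mem_prod, mem_compl_iff]
    tauto
  rw [this, measure_union (Set.disjoint_prod.2 (.inl disjoint_compl_right)) (hs.compl.prod hs),
    Measure.prod_prod, Measure.prod_prod]

lemma measurableSet_setOf_onArc {α : Type*} [MeasurableSpace α] {f g h : α → ℝ}
    (hf : Measurable f) (hg : Measurable g) (hh : Measurable h) :
    MeasurableSet {x | onArc (f x) (g x) (h x)} :=
  measurableSet_lt (measurable_mod2pi.comp (hh.sub hf)) (measurable_mod2pi.comp (hg.sub hf))

lemma measurableSet_setOf_chordsCross {α : Type*} [MeasurableSpace α] {f g h k : α → ℝ}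
    (hf : Measurable f) (hg : Measurable g) (hh : Measurable h) (hk : Measurable k) :
    MeasurableSet {x | chordsCross (f x) (g x) (h x) (k x)} := by
  have : {x | chordsCross (f x) (g x) (h x) (k x)} =
      {x | onArc (f x) (g x) (h x)} ∆ {x | onArc (f x) (g x) (k x)} := by
    ext x
    simp only [chordsCross, mem_ofPred_eq, mem_symmDiff]
    tauto
  rw [this]
  exact (measurableSet_setOf_onArc hf hg hh).symmDiff (measurableSet_setOf_onArc hf hg hk)

noncomputable def crossingProb (t : ℝ) : ℝ := 2 * (t / (2 * π)) * (1 - t / (2 * π))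

lemma continuous_crossingProb : Continuous crossingProb := by
  unfold crossingProb; fun_prop

lemma crossingProb_nonneg {t : ℝ} (ht : t ∈ Icc 0 (2 * π)) : 0 ≤ crossingProb t := by
  have h₀ := div_nonneg ht.1 two_pi_pos.le
  have h₁ := (div_le_one two_pi_pos).2 ht.2
  unfold crossingProb
  nlinarith

lemma unif_prod_setOf_chordsCross (a b : ℝ) :
    ((unif 0 (2 * π)).prod (unif 0 (2 * π))) {p | chordsCross a b p.1 p.2} =
      ENNReal.ofReal (crossingProb (mod2pi (b - a))) := by
  have harc : MeasurableSet {w | onArc a b w} :=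
    measurableSet_setOf_onArc measurable_const measurable_const measurable_id
  obtain ⟨h0, h2π⟩ := mod2pi_mem_Ico (b - a)
  have hs₀ : 0 ≤ mod2pi (b - a) / (2 * π) := div_nonneg h0 two_pi_pos.le
  have hs₁ : mod2pi (b - a) / (2 * π) ≤ 1 := (div_le_one two_pi_pos).2 h2π.le
  have hcompl : unif 0 (2 * π) {w | onArc a b w}ᶜ =
      ENNReal.ofReal (1 - mod2pi (b - a) / (2 * π)) := by
    rw [prob_compl_eq_one_sub harc, unif_setOf_onArc, ENNReal.ofReal_sub _ hs₀, ENNReal.ofReal_one]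
  refine (prod_setOf_mem_ne_mem _ _ harc).trans ?_
  rw [hcompl, unif_setOf_onArc, ← ENNReal.ofReal_mul hs₀, ← ENNReal.ofReal_mul (by linarith),
    ← ENNReal.ofReal_add (by positivity) (by nlinarith), crossingProb]
  congr 1
  ring

lemma integral_crossingProb :
    ∫ u in (0 : ℝ)..(2 * π), crossingProb u = 2 * π / 3 := by
  have h01 : ∫ t in (0 : ℝ)..1, 2 * t * (1 - t) = 1 / 3 := by
    rw [intervalIntegral.integral_congr (g := fun t ↦ 2 * t - 2 * t ^ 2) fun t _ ↦ by ring,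
      intervalIntegral.integral_sub (Continuous.intervalIntegrable (by fun_prop) _ _)
        (Continuous.intervalIntegrable (by fun_prop) _ _),
      intervalIntegral.integral_const_mul, intervalIntegral.integral_const_mul, integral_id,
      integral_pow]
    norm_num
  unfold crossingProb
  rw [intervalIntegral.integral_comp_div (fun t ↦ 2 * t * (1 - t)) two_pi_pos.ne', zero_div,
    div_self two_pi_pos.ne', h01, smul_eq_mul]
  ring

lemma lintegral_unif_crossingProb :
    ∫⁻ u, ENNReal.ofReal (crossingProb u) ∂unif 0 (2 * π) = 1 / 3 := by
  rw [lintegral_unif_ofReal two_pi_pos continuous_crossingProb.integrableOn_Icc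
    fun _ ↦ crossingProb_nonneg, integral_crossingProb, sub_zero,
    div_div_cancel_left' two_pi_pos.ne', ENNReal.ofReal_inv_of_pos three_pos,
    ENNReal.ofReal_ofNat, one_div]

lemma unif_prod_prod_setOf_chordsCross (a : ℝ) :
    ((unif 0 (2 * π)).prod ((unif 0 (2 * π)).prod (unif 0 (2 * π))))
      {q | chordsCross a q.1 q.2.1 q.2.2} = 1 / 3 := by
  rw [Measure.prod_apply (measurableSet_setOf_chordsCross measurable_const measurable_fst
    measurable_snd.fst measurable_snd.snd)]
  calc _ = ∫⁻ b, ENNReal.ofReal (crossingProb (mod2pi (b - a))) ∂unif 0 (2 * π) :=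
        lintegral_congr fun b ↦ unif_prod_setOf_chordsCross a b
    _ = ∫⁻ u, ENNReal.ofReal (crossingProb u) ∂unif 0 (2 * π) :=
        (measurePreserving_mod2pi_sub a).lintegral_comp
          continuous_crossingProb.measurable.ennreal_ofReal
    _ = 1 / 3 := lintegral_unif_crossingProb

/-- For four independent uniform points on the circle, paired into two pairs,
    the probability that the two chords intersect is 1/3. -/
theorem chords_cross_probability :
    ((unif 0 (2 * π)).prod ((unif 0 (2 * π)).prod
        ((unif 0 (2 * π)).prod (unif 0 (2 * π)))))
      {p : ℝ × ℝ × ℝ × ℝ | chordsCross p.1 p.2.1 p.2.2.1 p.2.2.2} = 1 / 3 := by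
  rw [Measure.prod_apply (measurableSet_setOf_chordsCross measurable_fst measurable_snd.fst
    measurable_snd.snd.fst measurable_snd.snd.snd)]
  simp only [preimage_ofPred_eq, unif_prod_prod_setOf_chordsCross, lintegral_const, measure_univ,
    mul_one]
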